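/- Identifiability of the CATE augmented with the learned substitute (Corollary to Theorem 1): let W = k(H, ε) for a measurable k, and suppose ε is conditionally independent of the triple (Y₀, Y₁, Z) given σ(H), consistency holds (Y = W·Y₁ + (1−W)·Y₀), and overlap holds for the augmented σ-algebra 𝓖' = σ(H) ⊔ σ(Z), i.e. 0 < E[W | 𝓖'] < 1 almost surely. Then almost surely E[Y₁ − Y₀ | 𝓖'] = E[W·Y | 𝓖'] / E[W | 𝓖'] − E[(1−W)·Y | 𝓖'] / E[(1−W) | 𝓖']. -/

import Mathlib

/-!
Because `W = k(H, ε)` and `H` is `σ(H)`-measurable, the conditional independence of `ε` and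
`T = (Y₀, Y₁, Z)` given `σ(H)` upgrades to conditional independence of `σ(H, ε)` and `σ(T)`.
Hence conditioning on `T` as well does not change the propensity:
`E[W | σ(H) ⊔ σ(T)] = e := E[W | σ(H)]`. As `σ(H) ≤ 𝓖' ≤ σ(H) ⊔ σ(T)` and `Y₁` is
`σ(T)`-measurable, the tower property and pulling out `Y₁` give `E[W Y₁ | 𝓖'] = e E[Y₁ | 𝓖']`
and `E[W | 𝓖'] = e`. Consistency turns `W Y` into `W Y₁` and `(1 - W) Y` into `(1 - W) Y₀`, and
overlap lets us divide by `e` and `1 - e`.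
-/

open MeasureTheory ProbabilityTheory MeasurableSpace

section PiSystem

variable {Ω : Type*}

lemma IsPiSystem.image2_inter {p₁ p₂ : Set (Set Ω)} (h₁ : IsPiSystem p₁) (h₂ : IsPiSystem p₂) :
    IsPiSystem (Set.image2 (· ∩ ·) p₁ p₂) := by
  rintro _ ⟨A, hA, B, hB, rfl⟩ _ ⟨A', hA', B', hB', rfl⟩ hne
  rw [Set.inter_inter_inter_comm] at hne ⊢
  exact Set.mem_image2_of_mem (h₁ _ hA _ hA' hne.left) (h₂ _ hB _ hB' hne.right)

lemma MeasurableSpace.generateFrom_image2_inter (m₁ m₂ : MeasurableSpace Ω) :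
    generateFrom (Set.image2 (· ∩ ·) {s | MeasurableSet[m₁] s} {s | MeasurableSet[m₂] s})
      = m₁ ⊔ m₂ := by
  refine le_antisymm (generateFrom_le ?_) (sup_le (fun A hA => ?_) (fun B hB => ?_))
  · rintro _ ⟨A, hA, B, hB, rfl⟩
    exact (le_sup_left (b := m₂) A hA).inter (le_sup_right (a := m₁) B hB)
  · exact measurableSet_generateFrom ⟨A, hA, Set.univ, MeasurableSet.univ, Set.inter_univ A⟩
  · exact measurableSet_generateFrom ⟨Set.univ, MeasurableSet.univ, B, hB, Set.univ_inter B⟩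

end PiSystem

theorem MeasureTheory.setIntegral_eq_of_isPiSystem {Ω E : Type*}
    [NormedAddCommGroup E] [NormedSpace ℝ E]
    {m mΩ : MeasurableSpace Ω} (hm : m ≤ mΩ) {μ : Measure Ω} {p : Set (Set Ω)}
    (h_eq : m = generateFrom p) (hp : IsPiSystem p) {f g : Ω → E}
    (hf : Integrable f μ) (hg : Integrable g μ) (h_univ : ∫ ω, f ω ∂μ = ∫ ω, g ω ∂μ)
    (h_basic : ∀ s ∈ p, ∫ ω in s, f ω ∂μ = ∫ ω in s, g ω ∂μ) :
    ∀ s, MeasurableSet[m] s → ∫ ω in s, f ω ∂μ = ∫ ω in s, g ω ∂μ := by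
  refine induction_on_inter h_eq hp (by simp) h_basic ?_ ?_
  · intro s hs hfg
    have hf' := integral_add_compl (hm s hs) hf
    have hg' := integral_add_compl (hm s hs) hg
    rw [hfg] at hf'
    exact add_left_cancel (hf'.trans (h_univ.trans hg'.symm))
  · intro s hdisj hs hfg
    have hs' : ∀ i, MeasurableSet (s i) := fun i => hm _ (hs i)
    rw [integral_iUnion hs' hdisj hf.integrableOn, integral_iUnion hs' hdisj hg.integrableOn]
    exact tsum_congr hfg

namespace ProbabilityTheory

variable {Ω : Type*} {m' m₁ m₂ mΩ : MeasurableSpace Ω} {μ : Measure Ω} [IsFiniteMeasure μ]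

lemma condExp_inter_ae_eq_indicator_of_measurableSet_left {A s : Set Ω}
    (hA : MeasurableSet[m'] A) (hs : MeasurableSet s) :
    μ⟦A ∩ s | m'⟧ =ᵐ[μ] A.indicator (μ⟦s | m'⟧) := by
  rw [← Set.indicator_indicator]
  exact condExp_indicator ((integrable_const (1 : ℝ)).indicator hs) hA

variable [StandardBorelSpace Ω] {hm' : m' ≤ mΩ}

theorem CondIndep.sup_left_self (h : CondIndep m' m₁ m₂ hm' μ) (hm₁ : m₁ ≤ mΩ)
    (hm₂ : m₂ ≤ mΩ) : CondIndep m' (m' ⊔ m₁) m₂ hm' μ := by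
  refine CondIndepSets.condIndep (sup_le hm' hm₁) hm₂
    ((@isPiSystem_measurableSet Ω m').image2_inter (@isPiSystem_measurableSet Ω m₁))
    (@isPiSystem_measurableSet Ω m₂) (generateFrom_image2_inter m' m₁).symm
    (@generateFrom_measurableSet Ω m₂).symm ?_
  rw [condIndepSets_iff]
  · rintro _ C ⟨A, hA, B, hB, rfl⟩ hC
    have hB' := hm₁ B hB
    have hC' : MeasurableSet C := hm₂ C hC
    calc μ⟦A ∩ B ∩ C | m'⟧
        =ᵐ[μ] A.indicator (μ⟦B ∩ C | m'⟧) := by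
          rw [Set.inter_assoc]
          exact condExp_inter_ae_eq_indicator_of_measurableSet_left hA (hB'.inter hC')
      _ =ᵐ[μ] μ⟦A ∩ B | m'⟧ * μ⟦C | m'⟧ := by
          filter_upwards [(condIndep_iff _ _ _ hm' hm₁ hm₂ μ).mp h B C hB hC,
            condExp_inter_ae_eq_indicator_of_measurableSet_left hA hB'] with ω hBC hAB
          by_cases hωA : ω ∈ A <;> simp [hωA, hBC, hAB]
  · rintro _ ⟨A, hA, B, hB, rfl⟩
    exact (hm' A hA).inter (hm₁ B hB)
  · exact fun C hC => hm₂ C hC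

theorem CondIndep.condExp_sup_right_ae_eq (h : CondIndep m' m₁ m₂ hm' μ) (hm₁ : m₁ ≤ mΩ)
    (hm₂ : m₂ ≤ mΩ) {S : Set Ω} (hS : MeasurableSet[m₁] S) :
    μ⟦S | m' ⊔ m₂⟧ =ᵐ[μ] μ⟦S | m'⟧ := by
  have hsup : m' ⊔ m₂ ≤ mΩ := sup_le hm' hm₂
  have hS' : MeasurableSet S := hm₁ S hS
  have hSint : Integrable (S.indicator fun _ => (1 : ℝ)) μ := (integrable_const 1).indicator hS'
  have he_bdd : ∀ᵐ ω ∂μ, ‖(μ⟦S | m'⟧) ω‖ ≤ 1 := by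
    refine ae_bdd_norm_condExp_of_ae_bdd_norm (ae_of_all _ fun ω => ?_)
    by_cases hω : ω ∈ S <;> simp [hω]
  refine (ae_eq_condExp_of_forall_setIntegral_eq hsup hSint
    (fun _ _ _ => integrable_condExp.integrableOn) (fun s hs _ => ?_)
    (stronglyMeasurable_condExp.mono (le_sup_left : m' ≤ m' ⊔ m₂)).aestronglyMeasurable).symm
  refine setIntegral_eq_of_isPiSystem hsup (generateFrom_image2_inter m' m₂).symm
    ((@isPiSystem_measurableSet Ω m').image2_inter (@isPiSystem_measurableSet Ω m₂))
    integrable_condExp hSint (integral_condExp hm') ?_ s hs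
  rintro _ ⟨A, hA, C, hC, rfl⟩
  have hC' : MeasurableSet C := hm₂ C hC
  have hCint : Integrable (C.indicator fun _ => (1 : ℝ)) μ := (integrable_const 1).indicator hC'
  calc ∫ ω in A ∩ C, (μ⟦S | m'⟧) ω ∂μ
      = ∫ ω in A, (μ⟦S | m'⟧ * C.indicator fun _ => (1 : ℝ)) ω ∂μ := by
        rw [← setIntegral_indicator hC']
        congr 1 with ω
        by_cases hω : ω ∈ C <;> simp [hω]
    _ = ∫ ω in A, (μ⟦S | m'⟧ * μ⟦C | m'⟧) ω ∂μ := by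
        have hint : Integrable (μ⟦S | m'⟧ * C.indicator fun _ => (1 : ℝ)) μ :=
          hCint.bdd_mul integrable_condExp.aestronglyMeasurable he_bdd
        rw [← setIntegral_condExp hm' hint hA]
        exact setIntegral_congr_ae (hm' A hA) ((condExp_stronglyMeasurable_mul_of_bound hm'
          stronglyMeasurable_condExp hCint 1 he_bdd).mono fun ω hω _ => hω)
    _ = ∫ ω in A, (μ⟦S ∩ C | m'⟧) ω ∂μ :=
        setIntegral_congr_ae (hm' A hA) (((condIndep_iff _ _ _ hm' hm₁ hm₂ μ).mp h S C hS hC).mono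
          fun ω hω _ => hω.symm)
    _ = ∫ ω in A ∩ C, S.indicator (fun _ => (1 : ℝ)) ω ∂μ := by
        rw [setIntegral_condExp hm' ((integrable_const 1).indicator (hS'.inter hC')) hA,
          ← setIntegral_indicator hC', Set.indicator_indicator, Set.inter_comm]

end ProbabilityTheory

namespace MeasureTheory

variable {Ω : Type*} {m 𝓖 𝓕 mΩ : MeasurableSpace Ω} {μ : Measure Ω} [IsFiniteMeasure μ]

lemma condExp_ae_eq_of_le_of_condExp_ae_eq (hm𝓖 : m ≤ 𝓖) (h𝓖𝓕 : 𝓖 ≤ 𝓕) (h𝓕 : 𝓕 ≤ mΩ)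
    {X : Ω → ℝ} (hX : μ[X | 𝓕] =ᵐ[μ] μ[X | m]) : μ[X | 𝓖] =ᵐ[μ] μ[X | m] :=
  calc μ[X | 𝓖] =ᵐ[μ] μ[μ[X | 𝓕] | 𝓖] := (condExp_condExp_of_le h𝓖𝓕 h𝓕).symm
    _ =ᵐ[μ] μ[μ[X | m] | 𝓖] := condExp_congr_ae hX
    _ = μ[X | m] := condExp_of_stronglyMeasurable (h𝓖𝓕.trans h𝓕)
        (stronglyMeasurable_condExp.mono hm𝓖) integrable_condExp

lemma condExp_mul_ae_eq_of_condExp_ae_eq (hm𝓖 : m ≤ 𝓖) (h𝓖𝓕 : 𝓖 ≤ 𝓕) (h𝓕 : 𝓕 ≤ mΩ)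
    {X Y : Ω → ℝ} {C : ℝ} (hX : Integrable X μ) (hX_bdd : ∀ᵐ ω ∂μ, ‖X ω‖ ≤ C)
    (hXm : μ[X | 𝓕] =ᵐ[μ] μ[X | m]) (hY : StronglyMeasurable[𝓕] Y) (hYint : Integrable Y μ) :
    μ[X * Y | 𝓖] =ᵐ[μ] μ[X | m] * μ[Y | 𝓖] := by
  have hXY : Integrable (X * Y) μ := hYint.bdd_mul hX.aestronglyMeasurable hX_bdd
  calc μ[X * Y | 𝓖] =ᵐ[μ] μ[μ[X * Y | 𝓕] | 𝓖] := (condExp_condExp_of_le h𝓖𝓕 h𝓕).symm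
    _ =ᵐ[μ] μ[μ[X | m] * Y | 𝓖] := by
        refine condExp_congr_ae ?_
        filter_upwards [condExp_mul_of_stronglyMeasurable_right hY hXY hX, hXm] with ω h₁ h₂
        simp only [h₁, Pi.mul_apply, h₂]
    _ =ᵐ[μ] μ[X | m] * μ[Y | 𝓖] :=
        condExp_stronglyMeasurable_mul_of_bound (h𝓖𝓕.trans h𝓕)
          (stronglyMeasurable_condExp.mono hm𝓖) hYint C (ae_bdd_norm_condExp_of_ae_bdd_norm hX_bdd)

end MeasureTheory

theorem condExp_sub_ae_eq_div_sub_div {Ω : Type*} {m 𝓖 𝓕 mΩ : MeasurableSpace Ω}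
    {μ : Measure Ω} [IsFiniteMeasure μ] (hm𝓖 : m ≤ 𝓖) (h𝓖𝓕 : 𝓖 ≤ 𝓕) (h𝓕 : 𝓕 ≤ mΩ)
    {W Y₀ Y₁ Y : Ω → ℝ} (hW : Measurable W) (hWvals : ∀ ω, W ω = 0 ∨ W ω = 1)
    (hY₀ : StronglyMeasurable[𝓕] Y₀) (hY₁ : StronglyMeasurable[𝓕] Y₁)
    (hY₀int : Integrable Y₀ μ) (hY₁int : Integrable Y₁ μ)
    (hY : ∀ ω, Y ω = W ω * Y₁ ω + (1 - W ω) * Y₀ ω) (hW𝓕 : μ[W | 𝓕] =ᵐ[μ] μ[W | m])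
    (hoverlap : ∀ᵐ ω ∂μ, 0 < (μ[W | 𝓖]) ω ∧ (μ[W | 𝓖]) ω < 1) :
    ∀ᵐ ω ∂μ,
      (μ[fun ω => Y₁ ω - Y₀ ω | 𝓖]) ω =
        (μ[fun ω => W ω * Y ω | 𝓖]) ω / (μ[W | 𝓖]) ω
        - (μ[fun ω => (1 - W ω) * Y ω | 𝓖]) ω / (μ[fun ω => 1 - W ω | 𝓖]) ω := by
  have hW_bdd : ∀ᵐ ω ∂μ, ‖W ω‖ ≤ 1 :=
    ae_of_all _ fun ω => by rcases hWvals ω with h | h <;> simp [h]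
  have hWint : Integrable W μ := (integrable_const 1).mono' hW.aestronglyMeasurable hW_bdd
  have hWY : (fun ω => W ω * Y ω) = W * Y₁ := by
    funext ω; rcases hWvals ω with h | h <;> simp [hY, h]
  have hWY' : (fun ω => (1 - W ω) * Y ω) = Y₀ - W * Y₀ := by
    funext ω; rcases hWvals ω with h | h <;> simp [hY, h]
  have h₁ := condExp_mul_ae_eq_of_condExp_ae_eq hm𝓖 h𝓖𝓕 h𝓕 hWint hW_bdd hW𝓕 hY₁ hY₁int
  have h₀ := condExp_mul_ae_eq_of_condExp_ae_eq hm𝓖 h𝓖𝓕 h𝓕 hWint hW_bdd hW𝓕 hY₀ hY₀int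
  have he := condExp_ae_eq_of_le_of_condExp_ae_eq hm𝓖 h𝓖𝓕 h𝓕 hW𝓕
  have h1W : μ[fun ω => 1 - W ω | 𝓖] =ᵐ[μ] fun ω => 1 - (μ[W | 𝓖]) ω := by
    have := condExp_sub (integrable_const (1 : ℝ)) hWint 𝓖
    rwa [condExp_const (h𝓖𝓕.trans h𝓕)] at this
  have hWY₀int : Integrable (W * Y₀) μ := hY₀int.bdd_mul hW.aestronglyMeasurable hW_bdd
  rw [hWY, hWY', show (fun ω => Y₁ ω - Y₀ ω) = Y₁ - Y₀ from rfl]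
  filter_upwards [condExp_sub hY₁int hY₀int 𝓖, condExp_sub hY₀int hWY₀int 𝓖,
    h₁, h₀, he, h1W, hoverlap] with ω hdiff hsub h₁ h₀ he h1W hov
  have hpos : 0 < (μ[W | m]) ω := he ▸ hov.1
  have hpos' : 0 < 1 - (μ[W | m]) ω := by linarith [he ▸ hov.2]
  simp only [Pi.sub_apply, Pi.mul_apply] at hdiff hsub h₁ h₀
  rw [hdiff, hsub, h₁, h₀, h1W, he]
  field_simp

/-- **Identifiability of the CATE augmented with the learned substitute** (Corollary to
Theorem 1): if `W = k(H, ε)` with `ε` conditionally independent of `(Y₀, Y₁, Z)` given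
`σ(H)`, consistency holds, and overlap holds for `𝓖' = σ(H) ⊔ σ(Z)`, then the augmented
CATE is identified from the observed data. -/
theorem cate_identifiability_with_substitute
    {Ω : Type*} [MeasurableSpace Ω] [StandardBorelSpace Ω]
    {𝓗 E 𝓩 : Type*}
    [MeasurableSpace 𝓗] [StandardBorelSpace 𝓗]
    [MeasurableSpace E] [StandardBorelSpace E]
    [MeasurableSpace 𝓩] [StandardBorelSpace 𝓩]
    (P : Measure Ω) [IsProbabilityMeasure P]
    (Y₀ Y₁ W Y : Ω → ℝ) (H : Ω → 𝓗) (ε : Ω → E) (Z : Ω → 𝓩)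
    (hY₀ : Measurable Y₀) (hY₁ : Measurable Y₁)
    (hW : Measurable W) (hH : Measurable H) (hε : Measurable ε) (hZ : Measurable Z)
    (hY₀int : Integrable Y₀ P) (hY₁int : Integrable Y₁ P)
    (hWvals : ∀ ω, W ω = 0 ∨ W ω = 1)
    (k : 𝓗 × E → ℝ) (hk : Measurable k)
    (hWdef : ∀ ω, W ω = k (H ω, ε ω))
    (hindep : CondIndepFun (MeasurableSpace.comap H inferInstance) hH.comap_le
      ε (fun ω => (Y₀ ω, Y₁ ω, Z ω)) P)
    (hconsistency : ∀ ω, Y ω = W ω * Y₁ ω + (1 - W ω) * Y₀ ω)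
    (𝓖' : MeasurableSpace Ω)
    (h𝓖' : 𝓖' = MeasurableSpace.comap H inferInstance ⊔ MeasurableSpace.comap Z inferInstance)
    (hoverlap : ∀ᵐ ω ∂P, 0 < (P[W | 𝓖']) ω ∧ (P[W | 𝓖']) ω < 1) :
    ∀ᵐ ω ∂P,
      (P[fun ω => Y₁ ω - Y₀ ω | 𝓖']) ω =
        (P[fun ω => W ω * Y ω | 𝓖']) ω / (P[W | 𝓖']) ω
        - (P[fun ω => (1 - W ω) * Y ω | 𝓖']) ω / (P[fun ω => 1 - W ω | 𝓖']) ω := by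
  set T := fun ω => (Y₀ ω, Y₁ ω, Z ω)
  set mH := MeasurableSpace.comap H inferInstance
  set mT := MeasurableSpace.comap T inferInstance
  set mε := MeasurableSpace.comap ε inferInstance
  -- no ascription: `𝓖'` is the latest `MeasurableSpace Ω` in scope and would be picked up
  have hT := hY₀.prodMk (hY₁.prodMk hZ)
  have hT' : Measurable[mH ⊔ mT] T := (comap_measurable T).mono le_sup_right le_rfl
  have hS : MeasurableSet[mH ⊔ mε] (W ⁻¹' {1}) := by
    have hpair : Measurable[mH ⊔ mε] fun ω => (H ω, ε ω) :=
      ((comap_measurable H).mono le_sup_left le_rfl).prodMk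
        ((comap_measurable ε).mono le_sup_right le_rfl)
    rw [show W = fun ω => k (H ω, ε ω) from funext hWdef]
    exact hk.comp hpair (measurableSet_singleton 1)
  have hW_indicator : W = (W ⁻¹' {1}).indicator fun _ => 1 := by
    funext ω; rcases hWvals ω with h | h <;> simp [h]
  have hW_mean_indep : P[W | mH ⊔ mT] =ᵐ[P] P[W | mH] := by
    have hCI : CondIndep mH mε mT hH.comap_le P := (condIndepFun_iff_condIndep _ _ _ _ _).mp hindep
    rw [hW_indicator]
    exact (hCI.sup_left_self hε.comap_le hT.comap_le).condExp_sup_right_ae_eq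
      (sup_le hH.comap_le hε.comap_le) hT.comap_le hS
  have hZT : Measurable[mT] Z := (measurable_snd.comp measurable_snd).comp (comap_measurable T)
  have h𝓖'_le : 𝓖' ≤ mH ⊔ mT := h𝓖' ▸ sup_le_sup_left hZT.comap_le _
  exact condExp_sub_ae_eq_div_sub_div (h𝓖' ▸ le_sup_left) h𝓖'_le (sup_le hH.comap_le hT.comap_le)
    hW hWvals (measurable_fst.comp hT').stronglyMeasurable
    ((measurable_fst.comp measurable_snd).comp hT').stronglyMeasurable hY₀int hY₁int
    hconsistency hW_mean_indep hoverlap
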